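/- If A, B are positive semidefinite n×n matrices with A ≥ B, then the operator norm of A^{-1/2} B A^{-1/2} is at most 1, and consequently for p ∈ (0,1), A^p ≥ B^p follows from log-convexity of t ↦ ‖A^{-t/2} B^t A^{-t/2}‖: specifically, if f(t) = ‖A^{-t/2} B^t A^{-t/2}‖ is log-convex with f(0) = 1 and f(1) ≤ 1, then f(p) ≤ 1 for all p ∈ (0,1). -/

import Mathlib

open Matrix ComplexOrder

/-- The absolute value `|M| = (Mᴴ M)^{1/2}` of a complex matrix. -/
noncomputable def matAbs {n : ℕ} (M : Matrix (Fin n) (Fin n) ℂ) : Matrix (Fin n) (Fin n) ℂ :=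
  ((Matrix.posSemidef_conjTranspose_mul_self M).1.eigenvectorUnitary : Matrix (Fin n) (Fin n) ℂ) *
    Matrix.diagonal ((↑) ∘ (√·) ∘ (Matrix.posSemidef_conjTranspose_mul_self M).1.eigenvalues) *
    (star (Matrix.posSemidef_conjTranspose_mul_self M).1.eigenvectorUnitary : Matrix (Fin n) (Fin n) ℂ)

theorem matAbs_posSemidef {n : ℕ} (M : Matrix (Fin n) (Fin n) ℂ) : (matAbs M).PosSemidef := by
  unfold matAbs
  rw [Matrix.star_eq_conjTranspose]
  exact (Matrix.PosSemidef.diagonal (fun i => by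
    simp only [Pi.zero_apply, Function.comp_apply]
    exact_mod_cast Real.sqrt_nonneg _)).mul_mul_conjTranspose_same _

/-- Eigenvalues of a Hermitian matrix arranged in decreasing order:
`eigDesc hM j` is the `j`-th largest eigenvalue. -/
noncomputable def eigDesc {n : ℕ} {M : Matrix (Fin n) (Fin n) ℂ} (hM : M.IsHermitian) :
    Fin n → ℝ :=
  fun i => hM.eigenvalues (Tuple.sort hM.eigenvalues i.rev)

/-- Eigenvalues of a Hermitian matrix arranged in increasing order. -/
noncomputable def eigAsc {n : ℕ} {M : Matrix (Fin n) (Fin n) ℂ} (hM : M.IsHermitian) :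
    Fin n → ℝ :=
  fun i => hM.eigenvalues (Tuple.sort hM.eigenvalues i)

/-- The largest eigenvalue of a Hermitian matrix. -/
noncomputable def maxEig {n : ℕ} {M : Matrix (Fin n) (Fin n) ℂ} (hM : M.IsHermitian) : ℝ :=
  ⨆ i, hM.eigenvalues i

/-- Real power `M^t` of a Hermitian matrix, via the spectral decomposition. -/
noncomputable def rpowH {n : ℕ} {M : Matrix (Fin n) (Fin n) ℂ} (hM : M.IsHermitian) (t : ℝ) :
    Matrix (Fin n) (Fin n) ℂ :=
  (hM.eigenvectorUnitary : Matrix (Fin n) (Fin n) ℂ) *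
    Matrix.diagonal (fun i => ((hM.eigenvalues i ^ t : ℝ) : ℂ)) *
    star (hM.eigenvectorUnitary : Matrix (Fin n) (Fin n) ℂ)

theorem rpowH_isHermitian {n : ℕ} {M : Matrix (Fin n) (Fin n) ℂ} (hM : M.IsHermitian) (t : ℝ) :
    (rpowH hM t).IsHermitian := by
  unfold rpowH
  unfold Matrix.IsHermitian
  simp [Matrix.conjTranspose_mul, Matrix.diagonal_conjTranspose, mul_assoc,
    Matrix.star_eq_conjTranspose]
  congr 2
  funext i
  simp [star]
  rfl

/-- The ℓ²→ℓ² operator norm of a complex matrix. -/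
noncomputable def opN {n : ℕ} (M : Matrix (Fin n) (Fin n) ℂ) : ℝ :=
  ‖Matrix.toEuclideanCLM (𝕜 := ℂ) M‖

/-! The powers `rpowH` agree with the continuous functional calculus powers `A ^ t` in the
C⋆-algebra of matrices with the ℓ² operator norm. Conjugating `B ≤ A` by `A ^ (-1/2)` gives
`0 ≤ A ^ (-1/2) * B * A ^ (-1/2) ≤ 1`, so its norm is at most `1`; `B ^ p ≤ A ^ p` is the
Löwner–Heinz inequality (operator monotonicity of `x ↦ x ^ p` for `0 ≤ p ≤ 1`); and a log-convex
function is bounded on a segment by the larger of its endpoint values. -/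

open scoped MatrixOrder Matrix.Norms.L2Operator

section CStarAlgebra

variable {𝔄 : Type*} [CStarAlgebra 𝔄] [PartialOrder 𝔄] [StarOrderedRing 𝔄]

theorem CFC.rpow_neg_half_mul_self_mul_rpow_neg_half {a : 𝔄} (ha : IsStrictlyPositive a) :
    a ^ (-(1 : ℝ) / 2) * a * a ^ (-(1 : ℝ) / 2) = 1 := by
  nth_rw 2 [← CFC.rpow_one a]
  rw [← CFC.rpow_add ha.isUnit, ← CFC.rpow_add ha.isUnit,
    show -(1 : ℝ) / 2 + 1 + -(1 : ℝ) / 2 = 0 by norm_num, CFC.rpow_zero a]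

theorem norm_rpow_neg_half_mul_mul_rpow_neg_half_le_one {a b : 𝔄} (ha : IsStrictlyPositive a)
    (hb : 0 ≤ b) (hba : b ≤ a) : ‖a ^ (-(1 : ℝ) / 2) * b * a ^ (-(1 : ℝ) / 2)‖ ≤ 1 := by
  set c := a ^ (-(1 : ℝ) / 2)
  have hc : star c = c := (IsSelfAdjoint.of_nonneg CFC.rpow_nonneg).star_eq
  have hle : c * b * c ≤ c * a * c := by
    simpa only [hc] using star_left_conjugate_le_conjugate hba c
  rw [CFC.rpow_neg_half_mul_self_mul_rpow_neg_half ha] at hle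
  have hnonneg : 0 ≤ c * b * c := by
    simpa only [hc] using star_left_conjugate_nonneg hb c
  exact (CStarAlgebra.norm_le_one_iff_of_nonneg _ hnonneg).mpr hle

end CStarAlgebra

theorem le_one_of_convexOn_log_of_mem_segment {s : Set ℝ} {f : ℝ → ℝ}
    (hf : ConvexOn ℝ s fun t => Real.log (f t)) {x y z : ℝ} (hx : x ∈ s) (hy : y ∈ s)
    (hfx : f x ∈ Set.Icc 0 1) (hfy : f y ∈ Set.Icc 0 1) (hz : z ∈ segment ℝ x y) :
    f z ≤ 1 := by
  rcases le_or_gt (f z) 0 with hfz | hfz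
  · linarith
  have hlog : Real.log (f z) ≤ 0 :=
    (hf.le_on_segment hx hy hz).trans
      (max_le (Real.log_nonpos hfx.1 hfx.2) (Real.log_nonpos hfy.1 hfy.2))
  exact (Real.log_nonpos_iff hfz.le).mp hlog

section Matrix

variable {n : ℕ}

theorem rpowH_eq_cfc {M : Matrix (Fin n) (Fin n) ℂ} (hM : M.IsHermitian) (t : ℝ) :
    rpowH hM t = cfc (fun x : ℝ => x ^ t) M := by
  rw [hM.cfc_eq, IsHermitian.cfc, Unitary.conjStarAlgAut_apply]
  rfl

theorem rpowH_eq_rpow {M : Matrix (Fin n) (Fin n) ℂ} (hM : M.PosSemidef) (t : ℝ) :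
    rpowH hM.1 t = M ^ t := by
  rw [rpowH_eq_cfc, CFC.rpow_eq_cfc_real hM.nonneg]

theorem opN_eq_norm (M : Matrix (Fin n) (Fin n) ℂ) : opN M = ‖M‖ := rfl

end Matrix

theorem stmt_17 {n : ℕ} (A B : Matrix (Fin n) (Fin n) ℂ)
    (hA : A.PosDef) (hB : B.PosSemidef) (hBA : (A - B).PosSemidef) :
    opN (rpowH hA.1 (-(1 : ℝ) / 2) * B * rpowH hA.1 (-(1 : ℝ) / 2)) ≤ 1 ∧
    ((ConvexOn ℝ Set.univ fun t : ℝ => Real.log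
        (opN (rpowH hA.1 (-t / 2) * rpowH hB.1 t * rpowH hA.1 (-t / 2)))) →
      opN (rpowH hA.1 (-(0 : ℝ) / 2) * rpowH hB.1 0 * rpowH hA.1 (-(0 : ℝ) / 2)) = 1 →
      opN (rpowH hA.1 (-(1 : ℝ) / 2) * rpowH hB.1 1 * rpowH hA.1 (-(1 : ℝ) / 2)) ≤ 1 →
      ∀ p ∈ Set.Ioo (0 : ℝ) 1,
        opN (rpowH hA.1 (-p / 2) * rpowH hB.1 p * rpowH hA.1 (-p / 2)) ≤ 1) ∧
    (∀ p ∈ Set.Ioo (0 : ℝ) 1, (rpowH hA.1 p - rpowH hB.1 p).PosSemidef) := by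
  have hBleA : B ≤ A := Matrix.le_iff.mpr hBA
  refine ⟨?_, fun hconv h0 h1 p hp => ?_, fun p hp => ?_⟩
  · rw [opN_eq_norm, rpowH_eq_rpow hA.posSemidef]
    exact norm_rpow_neg_half_mul_mul_rpow_neg_half_le_one hA.isStrictlyPositive hB.nonneg hBleA
  · refine le_one_of_convexOn_log_of_mem_segment hconv (Set.mem_univ 0) (Set.mem_univ 1)
      ⟨norm_nonneg _, h0.le⟩ ⟨norm_nonneg _, h1⟩ ?_
    rw [segment_eq_Icc zero_le_one]
    exact Set.Ioo_subset_Icc_self hp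
  · rw [rpowH_eq_rpow hA.posSemidef, rpowH_eq_rpow hB, ← Matrix.le_iff]
    exact CFC.rpow_le_rpow (Set.Ioo_subset_Icc_self hp) hBleA
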